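/- Let G be a finite simple graph with vertex enumeration x_1, …, x_n. For k ≥ 2 and indices i < j, let z_{k,i,j} denote the number of k-node directed paths i = p_1 < p_2 < ⋯ < p_k (with x_{p_l} adjacent to x_{p_{l+1}} for all 1 ≤ l < k) such that p_2, …, p_k ≥ j, and set z_{1,i,j} := 1. Then for all indices i < η ≤ n−1 and all k ≥ 2: z_{k,i,η} = z_{k,i,η+1} + z_{k−1,η,η+1} · 1[(x_i, x_η) ∈ E(G)], where 1[(x_i, x_η) ∈ E(G)] is 1 if x_i and x_η are adjacent in G and 0 otherwise. -/
import Mathlib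


/- `pathCountFrom G x k i j` is the number of `(k+1)`-node directed paths starting at `x_i`
whose nodes after the first all have index at least `j`: strictly increasing sequences of
indices `i = p_0 < p_1 < ⋯ < p_k` with `p_1, …, p_k ≥ j` and `x_{p_l}` adjacent to
`x_{p_{l+1}}` for all `l`. In the paper's 1-based notation, `z_{k,i,j}` (for `k ≥ 2`,
with `z_{1,i,j} = 1`) corresponds to `pathCountFrom G x (k-1) i j` with 0-based indices. -/
open Classical in
noncomputable def pathCountFrom {V : Type*} [Fintype V] (G : SimpleGraph V) {n : ℕ}
    (x : Fin n ≃ V) (k : ℕ) (i : Fin n) (j : ℕ) : ℕ :=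
  (Finset.univ.filter (fun p : Fin (k + 1) → Fin n =>
    StrictMono p ∧ p 0 = i ∧ (∀ l : Fin k, j ≤ (p l.succ : ℕ)) ∧
      ∀ l : Fin k, G.Adj (x (p l.castSucc)) (x (p l.succ)))).card

/-- For all indices `i < η ≤ n-1` (0-based: `(η:ℕ)+1 < n`) and all `k ≥ 2` (written as
`k = m + 2`): `z_{k,i,η} = z_{k,i,η+1} + z_{k-1,η,η+1} · 1[(x_i, x_η) ∈ E(G)]`. -/
theorem stmt8 {V : Type*} [Fintype V] [DecidableEq V] (G : SimpleGraph V)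
    [DecidableRel G.Adj] (n : ℕ) (x : Fin n ≃ V)
    (m : ℕ) (i η : Fin n) (hi : i < η) (hη : (η : ℕ) + 1 < n) :
    pathCountFrom G x (m + 1) i (η : ℕ) =
      pathCountFrom G x (m + 1) i ((η : ℕ) + 1) +
        pathCountFrom G x m η ((η : ℕ) + 1) * (if G.Adj (x i) (x η) then 1 else 0) := by
  classical
  have e : ∀ (k : ℕ) (i' : Fin n) (j : ℕ), pathCountFrom G x k i' j =
      (Finset.univ.filter (fun p : Fin (k + 1) → Fin n =>
        StrictMono p ∧ p 0 = i' ∧ (∀ l : Fin k, j ≤ (p l.succ : ℕ)) ∧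
          ∀ l : Fin k, G.Adj (x (p l.castSucc)) (x (p l.succ)))).card := by
    intro k i' j
    unfold pathCountFrom
    congr 1
    exact Finset.filter_congr_decidable _ _ _
  rw [e, e, e]
  set A := (Finset.univ.filter (fun p : Fin (m + 1 + 1) → Fin n =>
    StrictMono p ∧ p 0 = i ∧ (∀ l : Fin (m+1), (η:ℕ) ≤ (p l.succ : ℕ)) ∧
      ∀ l : Fin (m+1), G.Adj (x (p l.castSucc)) (x (p l.succ)))) with hA
  have hone : ((0 : Fin (m+1)).succ) = (1 : Fin (m+1+1)) := rfl
  rw [← Finset.card_filter_add_card_filter_not (s := A) (p := fun p => p 1 ≠ η)]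
  congr 1
  · -- p 1 ≠ η case equals the η+1 count
    congr 1
    ext p
    simp only [hA, Finset.mem_filter, Finset.mem_univ, true_and]
    constructor
    · rintro ⟨⟨hmono, h0, hge, hadj⟩, hne⟩
      refine ⟨hmono, h0, fun l => ?_, hadj⟩
      have h1 : (η:ℕ) < (p 1 : ℕ) := by
        have h := hge 0
        rw [hone] at h
        rcases lt_or_eq_of_le h with h | h
        · exact h
        · exact absurd (Fin.ext h.symm) hne
      have h2 : p 1 ≤ p l.succ := by
        refine hmono.monotone ?_
        rw [← hone]
        exact Fin.succ_le_succ_iff.mpr (Fin.zero_le l)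
      have := (Fin.le_iff_val_le_val.mp h2)
      omega
    · rintro ⟨hmono, h0, hge, hadj⟩
      refine ⟨⟨hmono, h0, fun l => le_of_lt ?_, hadj⟩, fun heq => ?_⟩
      · have := hge l; omega
      · have := hge 0
        rw [hone, heq] at this
        omega
  · -- p 1 = η case
    by_cases hadj : G.Adj (x i) (x η)
    · rw [if_pos hadj, mul_one]
      refine Finset.card_bij' (fun p _ => fun l : Fin (m+1) => p l.succ)
        (fun q _ => Fin.cons i q) ?_ ?_ ?_ ?_
      · rintro p hp
        simp only [hA, Finset.mem_filter, Finset.mem_univ, true_and, not_not] at hp ⊢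
        obtain ⟨⟨hmono, h0, hge, hadjp⟩, h1⟩ := hp
        refine ⟨hmono.comp (Fin.strictMono_succ), ?_, fun l => ?_, fun l => ?_⟩
        · rw [hone]; exact h1
        · -- η + 1 ≤ p l.succ.succ
          have h2 : p 1 < p l.succ.succ := by
            apply hmono
            rw [← hone]
            exact Fin.succ_lt_succ_iff.mpr (Fin.succ_pos l)
          rw [h1] at h2
          exact h2
        · have := hadjp l.succ
          rwa [← Fin.succ_castSucc] at this
      · rintro q hq
        simp only [hA, Finset.mem_filter, Finset.mem_univ, true_and, not_not] at hq ⊢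
        obtain ⟨hmono, h0, hge, hadjq⟩ := hq
        have hconsmono : StrictMono (Fin.cons i q : Fin (m+1+1) → Fin n) := by
          intro a b hab
          induction b using Fin.cases with
          | zero => exact absurd hab (by simp)
          | succ b =>
            induction a using Fin.cases with
            | zero =>
              simp only [Fin.cons_zero, Fin.cons_succ]
              exact lt_of_lt_of_le (h0 ▸ hi) (hmono.monotone (Fin.zero_le b))
            | succ a =>
              simp only [Fin.cons_succ]
              exact hmono (Fin.succ_lt_succ_iff.mp hab)
        refine ⟨⟨hconsmono, rfl, fun l => ?_, fun l => ?_⟩, ?_⟩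
        · simp only [Fin.cons_succ]
          induction l using Fin.cases with
          | zero => rw [h0]
          | succ l => have := hge l; omega
        · induction l using Fin.cases with
          | zero =>
            simp only [Fin.castSucc_zero, Fin.cons_zero, Fin.cons_succ, h0]
            exact hadj
          | succ l =>
            rw [← Fin.succ_castSucc]
            simp only [Fin.cons_succ]
            exact hadjq l
        · rw [← hone, Fin.cons_succ, h0]
      · rintro p hp
        simp only [hA, Finset.mem_filter, Finset.mem_univ, true_and, not_not] at hp
        obtain ⟨⟨hmono, h0, hge, hadjp⟩, h1⟩ := hp
        funext l
        induction l using Fin.cases with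
        | zero => simp [h0]
        | succ l => simp
      · rintro q hq
        funext l
        simp
    · rw [if_neg hadj, mul_zero]
      rw [Finset.card_eq_zero]
      ext p
      simp only [hA, Finset.mem_filter, Finset.mem_univ, true_and, not_not,
        Finset.notMem_empty, iff_false, not_and]
      rintro ⟨hmono, h0, hge, hadjp⟩ h1
      have := hadjp 0
      rw [Fin.castSucc_zero, h0, hone, h1] at this
      exact hadj this
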